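/- arXiv:1905.03860 — 5 statements merged into one kernel-verified Lean document; each statement's English description precedes it below -/
import Mathlib

section
/- Let n ≥ 1 be an integer and k_1,...,k_n nonnegative reals, extended periodically by k_{r+n} = k_r. Let ψ(j) = Σ_{ℓ=1}^{j} k_ℓ (with ψ(0)=0) and fix a real m > ψ(n). Let N be the number of indices j ∈ {0,1,...,n-1} such that ψ(j+r) − ψ(j) < (m/n)·r for all r = 1,...,n. Then N ≥ ⌈n(1 − ψ(n)/m)⌉. -/
/-!
Put `c = m / n` and `f t = ψ t - c t`. Since the `k r` are nonnegative, `f` falls by at most `c`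
per step, and by periodicity it falls by exactly `d = m - ψ n > 0` per period. Hence the future
maximum `M t = max_{s ≥ t} f s` exists and also falls by `d` per period; it falls by at most `c`
per step, and only at steps `t` where `f t` exceeds every later value. Summing over one period, at
least `d / c = n (1 - ψ n / m)` of the steps `0, …, n - 1` are such strict future maxima, and each
of them is a starting point counted by `N`.
-/

open scoped Classical

namespace CyclicBallot

def IsStrictFutureMax (f : ℕ → ℝ) (t : ℕ) : Prop := ∀ r, 0 < r → f (t + r) < f t

noncomputable def futureMax (f : ℕ → ℝ) (t : ℕ) : ℝ := sSup (f '' Set.Ici t)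

theorem sum_Icc_one_add_period {M : Type*} [AddCommMonoid M] {k : ℕ → M} {n : ℕ}
    (hk : Function.Periodic k n) (t : ℕ) :
    ∑ ℓ ∈ Finset.Icc 1 (t + n), k ℓ = ∑ ℓ ∈ Finset.Icc 1 t, k ℓ + ∑ ℓ ∈ Finset.Icc 1 n, k ℓ := by
  induction t with
  | zero => simp
  | succ t ih =>
    rw [add_right_comm, Finset.sum_Icc_succ_top (by omega), ih, Finset.sum_Icc_succ_top (by omega),
      ← add_right_comm t 1 n, hk]
    abel

section

variable {f : ℕ → ℝ} {n : ℕ} {c d : ℝ}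

theorem apply_add_mul_period (hf : ∀ t, f (t + n) = f t - d) (t q : ℕ) :
    f (t + q * n) = f t - q * d := by
  induction q with
  | zero => simp
  | succ q ih =>
    rw [add_mul, one_mul, ← add_assoc, hf, ih]
    push_cast
    ring

variable (hn : 0 < n) (hd : 0 ≤ d) (hf : ∀ t, f (t + n) = f t - d)
include hn hd hf

theorem isGreatest_futureMax (t : ℕ) : IsGreatest (f '' Set.Ici t) (futureMax f t) := by
  suffices h : ∃ M, IsGreatest (f '' Set.Ici t) M by
    obtain ⟨M, hM⟩ := h
    rwa [futureMax, hM.csSup_eq]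
  obtain ⟨s, hs, hmax⟩ :=
    (Finset.Ico t (t + n)).exists_max_image f (Finset.nonempty_Ico.2 (by omega))
  refine ⟨f s, ⟨s, (Finset.mem_Ico.1 hs).1, rfl⟩, ?_⟩
  rintro _ ⟨u, hu, rfl⟩
  obtain ⟨i, q, hi, rfl⟩ : ∃ i q, i < n ∧ u = t + i + q * n :=
    ⟨(u - t) % n, (u - t) / n, Nat.mod_lt _ hn, by
      have := Nat.mod_add_div (u - t) n
      simp only [Set.mem_Ici] at hu
      lia⟩
  calc f (t + i + q * n) = f (t + i) - q * d := apply_add_mul_period hf _ _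
    _ ≤ f (t + i) := sub_le_self _ (by positivity)
    _ ≤ f s := hmax _ (Finset.mem_Ico.2 ⟨by omega, by omega⟩)

theorem futureMax_add_period (t : ℕ) : futureMax f (t + n) = futureMax f t - d := by
  obtain ⟨s, hs, hs_max⟩ := (isGreatest_futureMax hn hd hf t).1
  refine (isGreatest_futureMax hn hd hf (t + n)).unique ⟨⟨s + n, ?_, by rw [hf, hs_max]⟩, ?_⟩
  · simp only [Set.mem_Ici] at hs ⊢
    omega
  rintro _ ⟨u, hu, rfl⟩
  obtain ⟨s, rfl⟩ : ∃ s, u = s + n := ⟨u - n, by simp only [Set.mem_Ici] at hu; omega⟩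
  rw [hf]
  exact sub_le_sub_right ((isGreatest_futureMax hn hd hf t).2
    ⟨s, by simp only [Set.mem_Ici] at hu ⊢; omega, rfl⟩) d

theorem futureMax_eq_max (t : ℕ) : futureMax f t = max (f t) (futureMax f (t + 1)) := by
  have h := isGreatest_futureMax hn hd hf (t + 1)
  rw [futureMax, ← Set.Ioi_insert, ← Set.Ici_add_one_eq_Ioi, Set.image_insert_eq,
    csSup_insert h.bddAbove ⟨_, h.1⟩, futureMax]

theorem isStrictFutureMax_iff (t : ℕ) :
    IsStrictFutureMax f t ↔ futureMax f (t + 1) < f t := by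
  have h := isGreatest_futureMax hn hd hf (t + 1)
  constructor
  · intro ht
    obtain ⟨s, hs, hs_max⟩ := h.1
    obtain ⟨r, rfl⟩ : ∃ r, s = t + 1 + r := ⟨s - (t + 1), by simp only [Set.mem_Ici] at hs; omega⟩
    rw [← hs_max, add_assoc]
    exact ht _ (by omega)
  · intro ht r hr
    exact (h.2 ⟨t + r, by simp only [Set.mem_Ici]; omega, rfl⟩).trans_lt ht

theorem futureMax_sub_futureMax_succ_le (hstep : ∀ t, f t - c ≤ f (t + 1)) (t : ℕ) :
    futureMax f t - futureMax f (t + 1) ≤ if IsStrictFutureMax f t then c else 0 := by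
  rw [futureMax_eq_max hn hd hf, isStrictFutureMax_iff hn hd hf]
  split_ifs with ht
  · have := (isGreatest_futureMax hn hd hf (t + 1)).2 ⟨t + 1, Set.mem_Ici.2 le_rfl, rfl⟩
    rw [max_eq_left ht.le]
    linarith [hstep t]
  · rw [max_eq_right (not_lt.1 ht), sub_self]

theorem le_mul_card_isStrictFutureMax (hstep : ∀ t, f t - c ≤ f (t + 1)) :
    d ≤ c * ((Finset.range n).filter (IsStrictFutureMax f)).card := by
  calc d = futureMax f 0 - futureMax f n := by
        rw [← zero_add n, futureMax_add_period hn hd hf]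
        ring
    _ = ∑ t ∈ Finset.range n, (futureMax f t - futureMax f (t + 1)) :=
        (Finset.sum_range_sub' _ n).symm
    _ ≤ ∑ t ∈ Finset.range n, if IsStrictFutureMax f t then c else 0 :=
        Finset.sum_le_sum fun t _ => futureMax_sub_futureMax_succ_le hn hd hf hstep t
    _ = c * ((Finset.range n).filter (IsStrictFutureMax f)).card := by
        rw [Finset.sum_ite, Finset.sum_const_zero, add_zero, Finset.sum_const, nsmul_eq_mul,
          mul_comm]

end

end CyclicBallot

/-- Cyclic Ballot Theorem (Proposition `th-ballot`). -/
theorem cyclic_ballot (n : ℕ) (hn : 1 ≤ n) (k : ℕ → ℝ)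
    (hk : ∀ r, 0 ≤ k r) (hper : ∀ r, k (r + n) = k r)
    (ψ : ℕ → ℝ) (hψ : ∀ j, ψ j = ∑ ℓ ∈ Finset.Icc 1 j, k ℓ)
    (m : ℝ) (hm : ψ n < m)
    (N : ℕ)
    (hN : N = Finset.card ((Finset.range n).filter (fun j =>
      ∀ r ∈ Finset.Icc 1 n, ψ (j + r) - ψ j < (m / n) * r))) :
    (⌈(n : ℝ) * (1 - ψ n / m)⌉ : ℤ) ≤ (N : ℤ) := by
  have hψ_succ (t : ℕ) : ψ (t + 1) = ψ t + k (t + 1) := by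
    rw [hψ, hψ, Finset.sum_Icc_succ_top (Nat.le_add_left 1 t)]
  have hψ_add (t : ℕ) : ψ (t + n) = ψ t + ψ n := by
    simp only [hψ]
    exact CyclicBallot.sum_Icc_one_add_period hper t
  have hm_pos : 0 < m := (hψ n ▸ Finset.sum_nonneg fun ℓ _ => hk ℓ).trans_lt hm
  set c := m / n with hc
  set f : ℕ → ℝ := fun t => ψ t - c * t
  have hf_period (t : ℕ) : f (t + n) = f t - (m - ψ n) := by
    simp only [f, hψ_add, hc]
    push_cast
    field_simp
    ring
  have hf_step (t : ℕ) : f t - c ≤ f (t + 1) := by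
    simp only [f, hψ_succ]
    push_cast
    linarith [hk (t + 1)]
  have hcount :
      m - ψ n ≤ c * ((Finset.range n).filter (CyclicBallot.IsStrictFutureMax f)).card :=
    CyclicBallot.le_mul_card_isStrictFutureMax hn (sub_pos.2 hm).le hf_period hf_step
  have hN_bound : m - ψ n ≤ c * N := hcount.trans <| by
    rw [hN]
    gcongr with j
    intro hj r hr
    have := hj r (Finset.mem_Icc.1 hr).1
    simp only [f] at this
    push_cast at this
    linarith
  rw [Int.ceil_le]
  push_cast
  calc (n : ℝ) * (1 - ψ n / m) = (m - ψ n) / c := by rw [hc]; field_simp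
    _ ≤ N := div_le_of_le_mul₀ (by positivity) (by positivity) (by linarith)
end

section
/- Let n ≥ 1, k_1,...,k_n nonnegative reals extended periodically with period n, ψ(j) = Σ_{ℓ=1}^j k_ℓ, and m > ψ(n). If, for a real u ∈ [0,n) with j = ⌊u⌋ and u > j, the condition v − u ≥ ψ(⌊v⌋) − ψ(⌊u⌋) holds for all real v ≥ u (after rescaling so that m = n), then ψ(j+r) − ψ(j) < r for all r = 1,...,n. -/
theorem sub_floor_lt_of_forall_le {ψ : ℕ → ℝ} {u : ℝ}
    (hgood : ∀ v : ℝ, u ≤ v → ψ ⌊v⌋₊ - ψ ⌊u⌋₊ ≤ v - u) (hu : (⌊u⌋₊ : ℝ) < u)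
    {N : ℕ} (hN : u ≤ N) : ψ N - ψ ⌊u⌋₊ < N - ⌊u⌋₊ := by
  have h := hgood N hN
  rw [Nat.floor_natCast] at h
  linarith

theorem ballot_key_step_general (n : ℕ)
    (ψ : ℕ → ℝ)
    (u : ℝ)
    (j : ℕ) (hj : j = ⌊u⌋₊) (hju : (j : ℝ) < u)
    (hgood : ∀ v : ℝ, u ≤ v → ψ ⌊v⌋₊ - ψ ⌊u⌋₊ ≤ v - u) :
    ∀ r ∈ Finset.Icc 1 n, ψ (j + r) - ψ j < r := by
  subst hj
  intro r hr
  have hr1 : (1 : ℝ) ≤ r := by exact_mod_cast (Finset.mem_Icc.mp hr).1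
  have hu : u ≤ ((⌊u⌋₊ + r : ℕ) : ℝ) := by
    push_cast
    linarith [Nat.lt_floor_add_one u]
  simpa using sub_floor_lt_of_forall_le hgood hju hu

/-- Key step in the proof of the cyclic Ballot Theorem: a "good" real point `u`
strictly inside `[j, j+1)` forces index `j` to satisfy the strict discrete
ballot condition (after rescaling so that `m = n`). -/
theorem ballot_key_step (n : ℕ) (hn : 1 ≤ n) (k : ℕ → ℝ)
    (hk : ∀ r, 0 ≤ k r) (hper : ∀ r, k (r + n) = k r)
    (ψ : ℕ → ℝ) (hψ : ∀ j, ψ j = ∑ ℓ ∈ Finset.Icc 1 j, k ℓ)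
    (hm : ψ n < n)
    (u : ℝ) (hu0 : 0 ≤ u) (hun : u < n)
    (j : ℕ) (hj : j = ⌊u⌋₊) (hju : (j : ℝ) < u)
    (hgood : ∀ v : ℝ, u ≤ v → ψ ⌊v⌋₊ - ψ ⌊u⌋₊ ≤ v - u) :
    ∀ r ∈ Finset.Icc 1 n, ψ (j + r) - ψ j < r :=
  ballot_key_step_general n ψ u j hj hju hgood
end

section
/- Let f: ℝ → ℝ be nondecreasing and Lipschitz with constant 1/2 on an interval [a − Δ, a] (so 0 ≤ f(y) − f(x) ≤ (y−x)/2 for a−Δ ≤ x ≤ y ≤ a). Then for every δ with 0 ≤ δ ≤ Δ/2 the equation δ = δ₁ − (f(a) − f(a − δ₁)) has a unique solution δ₁ ∈ [0, Δ]; moreover δ ≤ δ₁ ≤ 2δ. -/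
/-- Unique solvability of the equation `δ = δ₁ - (f(a) - f(a - δ₁))`
determining how far left of the cluster edge `a` the sparse fluid (density at
most `1/2`, mass function `f`) extends so that it merges in time exactly `δ`. -/
theorem merge_equation_unique (f : ℝ → ℝ) (a Δ : ℝ) (hΔ : 0 < Δ)
    (hf : ∀ x y, a - Δ ≤ x → x ≤ y → y ≤ a →
      0 ≤ f y - f x ∧ f y - f x ≤ (y - x) / 2) :
    ∀ δ : ℝ, 0 ≤ δ → δ ≤ Δ / 2 →
      ∃! δ₁ : ℝ, δ₁ ∈ Set.Icc (0 : ℝ) Δ ∧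
        δ = δ₁ - (f a - f (a - δ₁)) ∧ δ ≤ δ₁ ∧ δ₁ ≤ 2 * δ := by
  intro δ hδ0 hδΔ
  obtain ⟨g, hg⟩ : ∃ g : ℝ → ℝ, ∀ t, g t = t - (f a - f (a - t)) :=
    ⟨fun t => t - (f a - f (a - t)), fun _ => rfl⟩
  have key : ∀ x y : ℝ, 0 ≤ x → x ≤ y → y ≤ Δ →
      (y - x) / 2 ≤ g y - g x ∧ g y - g x ≤ y - x := by
    intro x y hx hxy hyΔ
    have h := hf (a - y) (a - x) (by linarith) (by linarith) (by linarith)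
    rw [hg, hg]
    constructor <;> linarith [h.1, h.2]
  -- continuity of g on [0, Δ]
  have hlip : LipschitzOnWith (1/2 : NNReal) f (Set.Icc (a - Δ) a) := by
    apply LipschitzOnWith.of_dist_le_mul
    intro x hx y hy
    rw [Real.dist_eq, Real.dist_eq]
    have hb : |f x - f y| ≤ |x - y| / 2 := by
      rcases le_total x y with h | h
      · have h2 := hf x y hx.1 h hy.2
        rw [abs_sub_comm, abs_of_nonneg h2.1, abs_sub_comm x y,
          abs_of_nonneg (by linarith : (0:ℝ) ≤ y - x)]
        linarith [h2.2]
      · have h2 := hf y x hy.1 h hx.2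
        rw [abs_of_nonneg h2.1, abs_of_nonneg (by linarith : (0:ℝ) ≤ x - y)]
        linarith [h2.2]
    push_cast
    linarith [hb]
  have hmaps : Set.MapsTo (fun t : ℝ => a - t) (Set.Icc 0 Δ) (Set.Icc (a - Δ) a) := by
    intro t ht
    simp only [Set.mem_Icc] at ht ⊢
    constructor <;> linarith [ht.1, ht.2]
  have hcont : ContinuousOn g (Set.Icc 0 Δ) := by
    have : ContinuousOn (fun t : ℝ => t - (f a - f (a - t))) (Set.Icc 0 Δ) := by
      apply (continuousOn_id).sub
      apply continuousOn_const.sub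
      exact hlip.continuousOn.comp (continuous_const.sub continuous_id).continuousOn hmaps
    exact this.congr (fun t _ => hg t)
  have hg0 : g 0 = 0 := by rw [hg]; simp
  have hgΔ : Δ / 2 ≤ g Δ := by
    have h := (key 0 Δ le_rfl hΔ.le le_rfl).1
    rw [hg0] at h; linarith
  have hmem : δ ∈ Set.Icc (g 0) (g Δ) := ⟨by rw [hg0]; exact hδ0, by linarith⟩
  obtain ⟨δ₁, hδ₁mem, hδ₁eq⟩ := intermediate_value_Icc hΔ.le hcont hmem
  have hbounds : ∀ x ∈ Set.Icc (0:ℝ) Δ, g x = δ → δ ≤ x ∧ x ≤ 2 * δ := by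
    intro x hx hgx
    have h := key 0 x le_rfl hx.1 hx.2
    rw [hg0, hgx] at h
    constructor <;> linarith [h.1, h.2]
  have hb := hbounds δ₁ hδ₁mem hδ₁eq
  have heq : δ = δ₁ - (f a - f (a - δ₁)) := by rw [← hg, hδ₁eq]
  refine ⟨δ₁, ⟨hδ₁mem, heq, hb.1, hb.2⟩, ?_⟩
  rintro y ⟨hymem, hyeq, -, -⟩
  have hgy : g y = δ := by rw [hg]; exact hyeq.symm
  rcases le_total y δ₁ with h | h
  · have h2 := (key y δ₁ hymem.1 h hδ₁mem.2).1
    rw [hδ₁eq, hgy] at h2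
    linarith
  · have h2 := (key δ₁ y hδ₁mem.1 h hymem.2).1
    rw [hδ₁eq, hgy] at h2
    linarith
end

section
/- Let p: ℕ → [0,1) with p(0) = 0 and p(k) ∈ (0, δ], δ < 1, for k ≥ 1, and f as defined by f(0)=1, f(k) = (1/(1−p(k)))·Π_{m=1}^{k}((1−p(m))/p(m)). Suppose z > 0 is within the radius of convergence of G(z) = Σ_{k≥0} f(k)z^k. Define η = (Σ_{k≥1} p(k)f(k)z^k)/G(z). Then η = z − z·η, i.e., η = z/(1+z) and z = η/(1−η). -/
/-!
The weights satisfy the balance relation `p (k + 1) * f (k + 1) = (1 - p k) * f k`. Shifting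
the index in `N = ∑ p k f k z^k` therefore gives `N = z (G - N)` with `G = ∑ f k z^k > 0`, and
dividing by `G` yields `η = z (1 - η)`, whatever the rates `p` are.
-/

open Finset

section Weights

variable {K : Type*} [Field K] {p f : ℕ → K}

theorem one_sub_mul_eq_prod_Icc (hp0 : p 0 = 0) (hf0 : f 0 = 1)
    (hq : ∀ k, 1 ≤ k → 1 - p k ≠ 0)
    (hfk : ∀ k, 1 ≤ k →
      f k = (1 / (1 - p k)) * ∏ m ∈ Icc 1 k, ((1 - p m) / p m)) (k : ℕ) :
    (1 - p k) * f k = ∏ m ∈ Icc 1 k, ((1 - p m) / p m) := by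
  rcases Nat.eq_zero_or_pos k with rfl | hk
  · simp [hp0, hf0]
  · rw [hfk k hk, ← mul_assoc, mul_one_div_cancel (hq k hk), one_mul]

theorem mul_succ_eq_prod_Icc (hp : ∀ k, 1 ≤ k → p k ≠ 0)
    (hq : ∀ k, 1 ≤ k → 1 - p k ≠ 0)
    (hfk : ∀ k, 1 ≤ k →
      f k = (1 / (1 - p k)) * ∏ m ∈ Icc 1 k, ((1 - p m) / p m)) (k : ℕ) :
    p (k + 1) * f (k + 1) = ∏ m ∈ Icc 1 k, ((1 - p m) / p m) := by
  have hp' := hp (k + 1) k.succ_pos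
  have hq' := hq (k + 1) k.succ_pos
  rw [hfk (k + 1) k.succ_pos, prod_Icc_succ_top (by omega)]
  field_simp

theorem mul_succ_eq_one_sub_mul (hp0 : p 0 = 0) (hf0 : f 0 = 1)
    (hp : ∀ k, 1 ≤ k → p k ≠ 0) (hq : ∀ k, 1 ≤ k → 1 - p k ≠ 0)
    (hfk : ∀ k, 1 ≤ k →
      f k = (1 / (1 - p k)) * ∏ m ∈ Icc 1 k, ((1 - p m) / p m)) (k : ℕ) :
    p (k + 1) * f (k + 1) = (1 - p k) * f k :=
  (mul_succ_eq_prod_Icc hp hq hfk k).trans (one_sub_mul_eq_prod_Icc hp0 hf0 hq hfk k).symm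

end Weights

theorem pos_of_mul_succ_eq_one_sub_mul {K : Type*} [Field K] [LinearOrder K]
    [IsStrictOrderedRing K] {p f : ℕ → K} (hf0 : 0 < f 0)
    (hp : ∀ k, 0 < p (k + 1)) (hp_lt : ∀ k, p k < 1)
    (hrec : ∀ k, p (k + 1) * f (k + 1) = (1 - p k) * f k) (k : ℕ) : 0 < f k := by
  induction k with
  | zero => exact hf0
  | succ k ih =>
    have hprod : 0 < p (k + 1) * f (k + 1) := hrec k ▸ mul_pos (sub_pos.2 (hp_lt k)) ih
    exact pos_of_mul_pos_right hprod (hp k).le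

theorem tsum_eq_mul_sub_of_succ {R : Type*} [Ring R] [TopologicalSpace R] [IsTopologicalRing R]
    [T2Space R] {a b : ℕ → R} {z : R} (ha : Summable a) (hb : Summable b) (hb0 : b 0 = 0)
    (hb_succ : ∀ k, b (k + 1) = z * (a k - b k)) :
    ∑' k, b k = z * (∑' k, a k - ∑' k, b k) := by
  calc ∑' k, b k = ∑' k, z * (a k - b k) := by
        simp_rw [hb.tsum_eq_zero_add, hb0, zero_add, hb_succ]
    _ = z * (∑' k, a k - ∑' k, b k) := by
        rw [Summable.tsum_mul_left _ (ha.sub hb), ha.tsum_sub hb]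

theorem eq_div_one_add_and_eq_div_one_sub {K : Type*} [Field K] {z η : K} (hz : 1 + z ≠ 0)
    (h : η = z - z * η) : η = z / (1 + z) ∧ z = η / (1 - η) := by
  have h_one_sub : (1 - η) * (1 + z) = 1 := by linear_combination -h
  refine ⟨eq_div_of_mul_eq hz (by linear_combination h), ?_⟩
  exact eq_div_of_mul_eq (left_ne_zero_of_mul_eq_one h_one_sub) (by linear_combination -h)

/-- Velocity–fugacity relation for the zero-range process: with the stationary
weights `f`, fugacity `z > 0` within the radius of convergence, and
`η = (Σ p(k)f(k)z^k)/(Σ f(k)z^k)`, one has `η = z - z·η`, i.e.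
`η = z/(1+z)` and `z = η/(1-η)`. -/
theorem zrp_velocity_fugacity (δ : ℝ) (hδ : δ < 1)
    (p : ℕ → ℝ) (hp0 : p 0 = 0) (hpk : ∀ k : ℕ, 1 ≤ k → 0 < p k ∧ p k ≤ δ)
    (f : ℕ → ℝ) (hf0 : f 0 = 1)
    (hfk : ∀ k : ℕ, 1 ≤ k →
      f k = (1 / (1 - p k)) * ∏ m ∈ Finset.Icc 1 k, ((1 - p m) / p m))
    (z : ℝ) (hz : 0 < z)
    (hsum : Summable (fun k : ℕ => f k * z ^ k))
    (hsum' : Summable (fun k : ℕ => p k * f k * z ^ k))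
    (η : ℝ) (hη : η = (∑' k : ℕ, p k * f k * z ^ k) / (∑' k : ℕ, f k * z ^ k)) :
    η = z - z * η ∧ η = z / (1 + z) ∧ z = η / (1 - η) := by
  have hp_lt : ∀ k, p k < 1 := by
    rintro (_ | k)
    · simp [hp0]
    · exact (hpk (k + 1) k.succ_pos).2.trans_lt hδ
  have hrec : ∀ k, p (k + 1) * f (k + 1) = (1 - p k) * f k :=
    mul_succ_eq_one_sub_mul hp0 hf0 (fun k hk => (hpk k hk).1.ne')
      (fun k _ => sub_ne_zero.2 (hp_lt k).ne') hfk
  have hf_pos : ∀ k, 0 < f k :=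
    pos_of_mul_succ_eq_one_sub_mul (by simp [hf0]) (fun k => (hpk (k + 1) k.succ_pos).1) hp_lt hrec
  have hG : 0 < ∑' k, f k * z ^ k :=
    hsum.tsum_pos (fun k => (mul_pos (hf_pos k) (pow_pos hz k)).le) 0 (by simp [hf0])
  have hN : ∑' k, p k * f k * z ^ k = z * (∑' k, f k * z ^ k - ∑' k, p k * f k * z ^ k) :=
    tsum_eq_mul_sub_of_succ hsum hsum' (by simp [hp0]) fun k => by rw [hrec k]; ring
  have hvel : η = z - z * η := by
    rw [hη]
    field_simp
    linear_combination hN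
  exact ⟨hvel, eq_div_one_add_and_eq_div_one_sub (by positivity) hvel⟩
end

section
/- Fix 0 < p < 1, 0 < π < 1, and q > 0 with q ≠ p. Suppose η ∈ (0,1) satisfies (q − η)(p − η)(η(p − π − πp) + πp) = p²(1−π)·η(1−η), and that η ≤ q, η < p, and η depends continuously on π ∈ [p, 1) with the right-hand side staying positive. Then as π ↑ 1, η → min(q, p). -/
set_option maxHeartbeats 1000000


open Filter Topology

/-- Limit of the stationary hole velocity as `π ↑ 1`: if `η = η_π ∈ (0,1)`
satisfies the cubic equation
`(q-η)(p-η)(η(p-π-πp)+πp) = p²(1-π)η(1-η)`, with `η ≤ q`, `η < p`,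
depends continuously on `π ∈ [p,1)`, and the right-hand side stays positive,
then `η → min(q,p)` as `π ↑ 1`. -/
theorem zrp_velocity_limit (p q : ℝ) (hp : 0 < p) (hp1 : p < 1)
    (hq : 0 < q) (hqp : q ≠ p)
    (η : ℝ → ℝ)
    (hrange : ∀ π ∈ Set.Ico p 1, η π ∈ Set.Ioo (0 : ℝ) 1)
    (heq : ∀ π ∈ Set.Ico p 1,
      (q - η π) * (p - η π) * (η π * (p - π - π * p) + π * p)
        = p ^ 2 * (1 - π) * η π * (1 - η π))
    (hle : ∀ π ∈ Set.Ico p 1, η π ≤ q ∧ η π < p)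
    (hcont : ContinuousOn η (Set.Ico p 1))
    (hpos : ∀ π ∈ Set.Ico p 1, 0 < p ^ 2 * (1 - π) * η π * (1 - η π)) :
    Tendsto η (nhdsWithin 1 (Set.Iio 1)) (nhds (min q p)) := by
  rw [Metric.tendsto_nhdsWithin_nhds]
  intro ε hε
  rcases lt_or_gt_of_ne hqp with hlt | hgt
  · -- case q < p, limit is q
    set m : ℝ := min (p ^ 2 * (1 - q)) (p - q) with hm
    have hm0 : 0 < m := lt_min (mul_pos (pow_pos hp 2) (by linarith)) (by linarith)
    refine ⟨min (1 - p) ((p - q) * m * ε / p ^ 2),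
      lt_min (by linarith) (div_pos (mul_pos (mul_pos (by linarith) hm0) hε) (by positivity)), ?_⟩
    intro x hx hdx
    have hx1 : x < 1 := hx
    rw [Real.dist_eq, abs_of_nonpos (by linarith)] at hdx
    have hxp : p ≤ x := by
      have := lt_of_lt_of_le hdx (min_le_left _ _); linarith
    have hd2 : 1 - x < (p - q) * m * ε / p ^ 2 := by
      have := lt_of_lt_of_le hdx (min_le_right _ _); linarith
    have hmem : x ∈ Set.Ico p 1 := ⟨hxp, hx1⟩
    obtain ⟨hη0, hη1⟩ := hrange x hmem
    obtain ⟨hηq, hηp⟩ := hle x hmem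
    have he := heq x hmem
    have hxpl : 0 ≤ x + x * p - p := by nlinarith
    have hf : m ≤ η x * (p - x - x * p) + x * p := by
      have h1 : 0 ≤ (q - η x) * (x + x * p - p) :=
        mul_nonneg (by linarith) hxpl
      rcases le_total (p - q - q * p) 0 with hc | hc
      · have hmb : m ≤ p - q := min_le_right _ _
        nlinarith [mul_nonneg (by linarith : (0:ℝ) ≤ 1 - x) (by linarith : (0:ℝ) ≤ -(p - q - q * p))]
      · have hmb : m ≤ p ^ 2 * (1 - q) := min_le_left _ _
        nlinarith [mul_nonneg (by linarith : (0:ℝ) ≤ x - p) hc]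
    have hkey : (q - η x) * ((p - q) * m) ≤ p ^ 2 * (1 - x) * η x * (1 - η x) := by
      rw [← he]
      have h2 : (p - q) * m ≤ (p - η x) * (η x * (p - x - x * p) + x * p) :=
        mul_le_mul (by linarith) hf hm0.le (by linarith)
      calc (q - η x) * ((p - q) * m)
          ≤ (q - η x) * ((p - η x) * (η x * (p - x - x * p) + x * p)) :=
            mul_le_mul_of_nonneg_left h2 (by linarith)
        _ = (q - η x) * (p - η x) * (η x * (p - x - x * p) + x * p) := by ring
    have h3 : p ^ 2 * (1 - x) * η x * (1 - η x) ≤ p ^ 2 * (1 - x) := by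
      nlinarith [mul_nonneg (mul_nonneg (sq_nonneg p) (by linarith : (0:ℝ) ≤ 1 - x))
        (sq_nonneg (η x - 1/2)), mul_nonneg (sq_nonneg p) (by linarith : (0:ℝ) ≤ 1 - x)]
    have h4 : p ^ 2 * (1 - x) < (p - q) * m * ε := by
      have h := (lt_div_iff₀ (show (0:ℝ) < p ^ 2 by positivity)).mp hd2
      nlinarith [h]
    have h5 : (q - η x) * ((p - q) * m) < ε * ((p - q) * m) := by nlinarith
    have h6 : q - η x < ε :=
      lt_of_mul_lt_mul_right h5 (le_of_lt (mul_pos (by linarith) hm0))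
    rw [min_eq_left hlt.le, Real.dist_eq, abs_lt]
    constructor <;> linarith
  · -- case p < q, limit is p
    set ε' : ℝ := min ε p with hε'def
    have hε'0 : 0 < ε' := lt_min hε hp
    have hε'ε : ε' ≤ ε := min_le_left _ _
    refine ⟨min (1 - p) ((q - p) * ε' ^ 2),
      lt_min (by linarith) (mul_pos (by linarith) (pow_pos hε'0 2)), ?_⟩
    intro x hx hdx
    have hx1 : x < 1 := hx
    rw [Real.dist_eq, abs_of_nonpos (by linarith)] at hdx
    have hxp : p ≤ x := by
      have := lt_of_lt_of_le hdx (min_le_left _ _); linarith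
    have hd2 : 1 - x < (q - p) * ε' ^ 2 := by
      have := lt_of_lt_of_le hdx (min_le_right _ _); linarith
    have hmem : x ∈ Set.Ico p 1 := ⟨hxp, hx1⟩
    obtain ⟨hη0, hη1⟩ := hrange x hmem
    obtain ⟨hηq, hηp⟩ := hle x hmem
    have he := heq x hmem
    rw [min_eq_right hgt.le, Real.dist_eq]
    rw [abs_of_nonpos (by linarith)]
    by_contra hcon
    push_neg at hcon
    have hηle : η x ≤ p - ε' := by linarith
    have hxpl : 0 ≤ x + x * p - p := by nlinarith
    have hf : ε' * p ^ 2 ≤ η x * (p - x - x * p) + x * p := by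
      nlinarith [mul_nonneg (by linarith : (0:ℝ) ≤ p - ε' - η x) hxpl,
        mul_nonneg hε'0.le (by nlinarith : (0:ℝ) ≤ x + x * p - p - p ^ 2),
        mul_nonneg (sq_nonneg p) (by linarith : (0:ℝ) ≤ 1 - x)]
    have hkey : (q - p) * ε' * (ε' * p ^ 2) ≤ p ^ 2 * (1 - x) * η x * (1 - η x) := by
      rw [← he]
      have h2 : (q - p) * ε' ≤ (q - η x) * (p - η x) :=
        mul_le_mul (by linarith) (by linarith) hε'0.le (by linarith)
      calc (q - p) * ε' * (ε' * p ^ 2)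
          ≤ (q - η x) * (p - η x) * (η x * (p - x - x * p) + x * p) :=
            mul_le_mul h2 hf (by positivity)
              (mul_nonneg (by linarith) (by linarith))
        _ = _ := rfl
    have h3 : p ^ 2 * (1 - x) * η x * (1 - η x) ≤ p ^ 2 * (1 - x) := by
      nlinarith [mul_nonneg (mul_nonneg (sq_nonneg p) (by linarith : (0:ℝ) ≤ 1 - x))
        (sq_nonneg (η x - 1/2)), mul_nonneg (sq_nonneg p) (by linarith : (0:ℝ) ≤ 1 - x)]
    have h4 : p ^ 2 * (1 - x) < p ^ 2 * ((q - p) * ε' ^ 2) :=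
      mul_lt_mul_of_pos_left hd2 (by positivity)
    linarith [hkey, h3, h4]
end
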